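/- Let Φ = (G, φ) be a T-gain graph on n vertices with at least one edge. Then for each vertex v_p, d_p^{3/2} / M_4(Φ, p)^{1/2} ≤ E_Φ(v_p), where d_p is the degree of v_p and M_4(Φ, p) = (A(Φ)^4)_{pp} is the sum of gains of closed 4-walks at v_p. -/

import Mathlib

open Matrix BigOperators
open scoped Classical ComplexOrder

/-- A complex unit gain graph (`𝕋`-gain graph) on a finite vertex type `V`. -/
structure TGainGraph (V : Type*) [Fintype V] [DecidableEq V] where
  G : SimpleGraph V
  A : Matrix V V ℂ
  herm : A.IsHermitian
  unitGain : ∀ i j, G.Adj i j → ‖A i j‖ = 1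
  zeroGain : ∀ i j, ¬ G.Adj i j → A i j = 0

namespace TGainGraph

variable {V : Type*} [Fintype V] [DecidableEq V]

/-- The energy of a `𝕋`-gain graph: sum of absolute values of eigenvalues of `A(Φ)`. -/
noncomputable def energy (Φ : TGainGraph V) : ℝ :=
  ∑ i, |Φ.herm.eigenvalues i|

/-- `|A(Φ)| = (A(Φ) A(Φ)ᴴ)^{1/2}`. -/
noncomputable def absMatrix (Φ : TGainGraph V) : Matrix V V ℂ :=
  ((Matrix.posSemidef_self_mul_conjTranspose Φ.A).1.eigenvectorUnitary : Matrix V V ℂ) *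
    diagonal (fun i => ((Real.sqrt ((Matrix.posSemidef_self_mul_conjTranspose Φ.A).1.eigenvalues i) : ℝ) : ℂ)) *
    (star (Matrix.posSemidef_self_mul_conjTranspose Φ.A).1.eigenvectorUnitary : Matrix V V ℂ)

/-- Energy of a vertex: the `(i,i)` entry of `|A(Φ)|`. -/
noncomputable def vertexEnergy (Φ : TGainGraph V) (i : V) : ℝ :=
  (Φ.absMatrix i i).re

/-- Degree of a vertex in the underlying graph. -/
noncomputable def deg (Φ : TGainGraph V) (i : V) : ℕ := Φ.G.degree i

/-- Maximum vertex degree of the underlying graph. -/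
noncomputable def maxDeg (Φ : TGainGraph V) : ℕ := Φ.G.maxDegree

/-- Spectral radius of `A(Φ)`. -/
noncomputable def specRadius (Φ : TGainGraph V) : ℝ :=
  ⨆ i, |Φ.herm.eigenvalues i|

/-- Switching equivalence of two gain graphs on the same vertex set: same
underlying graph, and adjacency matrices conjugate by a diagonal unitary. -/
def SwitchEquiv (Φ₁ Φ₂ : TGainGraph V) : Prop :=
  Φ₁.G = Φ₂.G ∧ ∃ U : Matrix V V ℂ, U.IsDiag ∧ U ∈ Matrix.unitaryGroup V ℂ ∧
    Φ₁.A = U * Φ₂.A * Uᴴ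

/-- `Φ` switches to the all-ones gain on its underlying graph,
i.e. `Φ ∼ (G, 1)` (equivalently, `Φ` is balanced). -/
def SwitchesToOne (Φ : TGainGraph V) : Prop :=
  ∃ U : Matrix V V ℂ, U.IsDiag ∧ U ∈ Matrix.unitaryGroup V ℂ ∧
    Φ.A = U * (Φ.G.adjMatrix ℂ) * Uᴴ

/-- `Φ ∼ (K_{a,b}, 1)`: the underlying graph is (isomorphic to) the complete
bipartite graph `K_{a,b}` via some bijection `e`, and the gains switch to `1`. -/
def SwitchEquivToCompleteBipartite (Φ : TGainGraph V) (a b : ℕ) : Prop :=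
  (∃ e : V ≃ (Fin a ⊕ Fin b), ∀ i j, Φ.G.Adj i j ↔
      (completeBipartiteGraph (Fin a) (Fin b)).Adj (e i) (e j)) ∧
  SwitchesToOne Φ

/-- The gain of a walk: the product of the gains of its edges in order. -/
noncomputable def walkGain (Φ : TGainGraph V) {u v : V} (w : Φ.G.Walk u v) : ℂ :=
  (w.darts.map (fun d => Φ.A d.fst d.snd)).prod

/-- A gain graph is balanced if every cycle has gain `1`. -/
def Balanced (Φ : TGainGraph V) : Prop :=
  ∀ (u : V) (w : Φ.G.Walk u u), w.IsCycle → Φ.walkGain w = 1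

/-- The restriction of a gain graph to a set of vertices. -/
noncomputable def restrict (Φ : TGainGraph V) (s : Set V) : TGainGraph s where
  G := Φ.G.induce s
  A := Φ.A.submatrix (Subtype.val) (Subtype.val)
  herm := Φ.herm.submatrix _
  unitGain := fun i j h => Φ.unitGain i j h
  zeroGain := fun i j h => Φ.zeroGain i j h

/-- The vertex set of the connected component `c`. -/
def componentSet (Φ : TGainGraph V) (c : Φ.G.ConnectedComponent) : Set V :=
  {v | Φ.G.connectedComponentMk v = c}

/-- Every connected component of `Φ` is either an isolated vertex or a balanced
complete bipartite gain graph `(K_{k,k},1)` with a perfect matching. -/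
def ComponentsBalancedCompleteBipartitePM (Φ : TGainGraph V) : Prop :=
  ∀ c : Φ.G.ConnectedComponent,
    (∀ v ∈ Φ.componentSet c, ∀ w, ¬ Φ.G.Adj v w) ∨
    ∃ k : ℕ, 0 < k ∧
      (Φ.restrict (Φ.componentSet c)).SwitchEquivToCompleteBipartite k k

/-- The matching number of a graph. -/
noncomputable def matchingNumber (G : SimpleGraph V) : ℕ :=
  sSup {k | ∃ M : G.Subgraph, M.IsMatching ∧ M.edgeSet.ncard = k}

/-- The vertex cover number of a graph. -/
noncomputable def coverNumber (G : SimpleGraph V) : ℕ :=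
  sInf {k | ∃ s : Finset V, s.card = k ∧ ∀ i j, G.Adj i j → i ∈ s ∨ j ∈ s}

/-- The number of odd cycles of a graph (counted by their edge sets). -/
noncomputable def oddCycleCount (G : SimpleGraph V) : ℕ :=
  Set.ncard {s : Set (Sym2 V) | ∃ (u : V) (w : G.Walk u u),
    w.IsCycle ∧ Odd w.length ∧ s = {e | e ∈ w.edges}}

end TGainGraph


/-! Diagonalise `A = U diag(λ) Uᴴ`. Every diagonal entry of a real function of `A` is an
average against the same weights: `f(A)_{pp} = ∑ⱼ f(λⱼ) wⱼ` with `wⱼ = |U_{pj}|²`. Since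
`|A| = (A Aᴴ)^{1/2}` is the functional calculus of `|·|` at the Hermitian `A`, taking
`f = λ²`, `|λ|`, `λ⁴` expresses `d_p`, `E_Φ(v_p)` and `M₄(Φ,p)` as moments of one measure, and
the claim becomes Hölder's inequality `(∑ λ² w)³ ≤ (∑ |λ| w)² ∑ λ⁴ w`, obtained from two
Cauchy–Schwarz steps through the third absolute moment `∑ |λ|³ w`. -/

theorem Finset.pow_three_sum_sq_mul_le {ι : Type*} (s : Finset ι) (x u : ι → ℝ)
    (hu : ∀ j ∈ s, 0 ≤ u j) :
    (∑ j ∈ s, x j ^ 2 * u j) ^ 3 ≤ (∑ j ∈ s, |x j| * u j) ^ 2 * ∑ j ∈ s, x j ^ 4 * u j := by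
  set d := ∑ j ∈ s, x j ^ 2 * u j
  set E := ∑ j ∈ s, |x j| * u j
  set M := ∑ j ∈ s, x j ^ 4 * u j
  set S := ∑ j ∈ s, |x j| ^ 3 * u j
  have hd : 0 ≤ d := Finset.sum_nonneg fun j hj => mul_nonneg (sq_nonneg _) (hu j hj)
  have hdS : d ^ 2 ≤ E * S := by
    refine Finset.sum_sq_le_sum_mul_sum_of_sq_le_mul s
      (fun j hj => mul_nonneg (abs_nonneg _) (hu j hj))
      (fun j hj => mul_nonneg (by positivity) (hu j hj)) fun j _ => le_of_eq ?_
    rw [← sq_abs (x j)]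
    ring
  have hSM : S ^ 2 ≤ d * M := by
    refine Finset.sum_sq_le_sum_mul_sum_of_sq_le_mul s
      (fun j hj => mul_nonneg (sq_nonneg _) (hu j hj))
      (fun j hj => mul_nonneg (by positivity) (hu j hj)) fun j _ => le_of_eq ?_
    rw [show x j ^ 4 = (x j ^ 2) ^ 2 by ring, ← sq_abs (x j)]
    ring
  have hM : 0 ≤ M := Finset.sum_nonneg fun j hj => mul_nonneg (by positivity) (hu j hj)
  rcases hd.eq_or_lt with hd0 | hdpos
  · rw [← hd0, zero_pow three_ne_zero]
    exact mul_nonneg (sq_nonneg E) hM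
  · refine le_of_mul_le_mul_left ?_ hdpos
    calc d * d ^ 3 = (d ^ 2) ^ 2 := by ring
      _ ≤ (E * S) ^ 2 := pow_le_pow_left₀ (sq_nonneg d) hdS 2
      _ = E ^ 2 * S ^ 2 := by ring
      _ ≤ E ^ 2 * (d * M) := mul_le_mul_of_nonneg_left hSM (sq_nonneg E)
      _ = d * (E ^ 2 * M) := by ring

theorem Real.rpow_three_halves_div_sqrt_le {d E M : ℝ} (hd : 0 ≤ d) (hE : 0 ≤ E)
    (h : d ^ 3 ≤ E ^ 2 * M) : d ^ ((3 : ℝ) / 2) / √M ≤ E := by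
  rcases (Real.sqrt_nonneg M).eq_or_lt with hM | hM
  · rw [← hM, div_zero]; exact hE
  rw [div_le_iff₀ hM]
  calc d ^ ((3 : ℝ) / 2) = √(d ^ 3) := by
        rw [Real.sqrt_eq_rpow, ← Real.rpow_natCast, ← Real.rpow_mul hd]; norm_num
    _ ≤ √(E ^ 2 * M) := Real.sqrt_le_sqrt h
    _ = E * √M := by rw [Real.sqrt_mul (sq_nonneg E), Real.sqrt_sq hE]

namespace Matrix.IsHermitian

variable {n 𝕜 : Type*} [Fintype n] [DecidableEq n] [RCLike 𝕜] {A : Matrix n n 𝕜}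

theorem re_cfc_apply_self (hA : A.IsHermitian) (f : ℝ → ℝ) (i : n) :
    RCLike.re (cfc f A i i) =
      ∑ j, f (hA.eigenvalues j) * ‖(hA.eigenvectorUnitary : Matrix n n 𝕜) i j‖ ^ 2 := by
  rw [hA.cfc_eq, IsHermitian.cfc, Unitary.conjStarAlgAut_apply, mul_apply, map_sum]
  refine Finset.sum_congr rfl fun j _ => ?_
  rw [mul_diagonal, star_apply, RCLike.star_def, mul_right_comm, RCLike.mul_conj,
    Function.comp_apply, Function.comp_apply, ← RCLike.ofReal_pow, ← RCLike.ofReal_mul,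
    RCLike.ofReal_re, mul_comm]

theorem cfc_sqrt_mul_conjTranspose (hA : A.IsHermitian) :
    cfc Real.sqrt (A * Aᴴ) = cfc (|·| : ℝ → ℝ) A := by
  rw [hA.eq, ← sq, ← cfc_pow_id (R := ℝ) A 2 hA.isSelfAdjoint,
    ← cfc_comp Real.sqrt _ A hA.isSelfAdjoint]
  congr 1
  funext x
  exact Real.sqrt_sq_eq_abs x

end Matrix.IsHermitian

namespace TGainGraph

variable {V : Type*} [Fintype V] [DecidableEq V]

theorem norm_A_apply_sq (Φ : TGainGraph V) (i j : V) :
    ‖Φ.A i j‖ ^ 2 = if Φ.G.Adj i j then 1 else 0 := by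
  by_cases h : Φ.G.Adj i j
  · rw [if_pos h, Φ.unitGain i j h, one_pow]
  · rw [if_neg h, Φ.zeroGain i j h, norm_zero, zero_pow two_ne_zero]

theorem deg_eq_re_sq_apply_self (Φ : TGainGraph V) (p : V) :
    (Φ.deg p : ℝ) = ((Φ.A ^ 2) p p).re := by
  have hrow : (Φ.A ^ 2) p p = ∑ j, ((‖Φ.A p j‖ ^ 2 : ℝ) : ℂ) := by
    rw [sq, mul_apply]
    refine Finset.sum_congr rfl fun j _ => ?_
    rw [← Φ.herm.apply j p, Complex.star_def, Complex.mul_conj, Complex.normSq_eq_norm_sq]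
  simp only [hrow, Complex.re_sum, Complex.ofReal_re, norm_A_apply_sq, Finset.sum_boole,
    deg, SimpleGraph.degree, SimpleGraph.neighborFinset_eq_filter]

theorem absMatrix_eq_cfc_abs (Φ : TGainGraph V) : Φ.absMatrix = cfc (|·| : ℝ → ℝ) Φ.A := by
  rw [← Φ.herm.cfc_sqrt_mul_conjTranspose,
    (posSemidef_self_mul_conjTranspose Φ.A).1.cfc_eq, IsHermitian.cfc]
  rfl

end TGainGraph

open TGainGraph in
theorem deg_pow_div_M4_le_vertexEnergy_general {V : Type*} [Fintype V] [DecidableEq V]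
    (Φ : TGainGraph V) (p : V) :
    (Φ.deg p : ℝ) ^ ((3 : ℝ) / 2) / Real.sqrt (((Φ.A ^ 4) p p).re)
      ≤ Φ.vertexEnergy p := by
  have hA := Φ.herm
  set w : V → ℝ := fun j => ‖(hA.eigenvectorUnitary : Matrix V V ℂ) p j‖ ^ 2
  have hw : ∀ j ∈ Finset.univ, 0 ≤ w j := fun j _ => sq_nonneg _
  have hdeg : (Φ.deg p : ℝ) = ∑ j, hA.eigenvalues j ^ 2 * w j := by
    rw [deg_eq_re_sq_apply_self, ← cfc_pow_id (R := ℝ) Φ.A 2 hA.isSelfAdjoint]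
    exact hA.re_cfc_apply_self _ p
  have hM4 : ((Φ.A ^ 4) p p).re = ∑ j, hA.eigenvalues j ^ 4 * w j := by
    rw [← cfc_pow_id (R := ℝ) Φ.A 4 hA.isSelfAdjoint]
    exact hA.re_cfc_apply_self _ p
  have henergy : Φ.vertexEnergy p = ∑ j, |hA.eigenvalues j| * w j := by
    rw [vertexEnergy, absMatrix_eq_cfc_abs]
    exact hA.re_cfc_apply_self _ p
  rw [hdeg, hM4, henergy]
  exact Real.rpow_three_halves_div_sqrt_le
    (Finset.sum_nonneg fun j hj => mul_nonneg (sq_nonneg _) (hw j hj))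
    (Finset.sum_nonneg fun j hj => mul_nonneg (abs_nonneg _) (hw j hj))
    (Finset.univ.pow_three_sum_sq_mul_le _ w hw)

open TGainGraph in
/-- `d_p^{3/2} / M₄(Φ,p)^{1/2} ≤ E_Φ(v_p)`, where `M₄(Φ,p) = (A(Φ)⁴)_{pp}`. -/
theorem deg_pow_div_M4_le_vertexEnergy {V : Type*} [Fintype V] [DecidableEq V]
    (Φ : TGainGraph V) (hE : Φ.G.edgeSet.Nonempty) (p : V) :
    (Φ.deg p : ℝ) ^ ((3 : ℝ) / 2) / Real.sqrt (((Φ.A ^ 4) p p).re)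
      ≤ Φ.vertexEnergy p :=
  deg_pow_div_M4_le_vertexEnergy_general Φ p
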